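/- For even n ≥ 2, the number of binary necklaces of length n containing an even number of 1's equals (1/2)·N₂(n) + (1/(2n))·Σ_{d | n, 2 | d} φ(d)·2^{n/d}, where N₂(n) = (1/n)·Σ_{d | n} φ(d)·2^{n/d} is the total number of binary necklaces of length n. -/

import Mathlib

/-- Two binary strings of length `n` are rotation-equivalent. -/
def necklaceRel (n : ℕ) (f g : Fin n → Bool) : Prop :=
  ∃ k : ℕ, g = f ∘ ⇑((finRotate n) ^ k)

/-- Number of ones in a binary string. -/
def onesCount {n : ℕ} (f : Fin n → Bool) : ℕ :=
  (Finset.univ.filter (fun i => f i = true)).card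

/-- Rotation relation restricted to strings with an even number of ones. -/
def necklaceRelEven (n : ℕ) (f g : {f : Fin n → Bool // Even (onesCount f)}) : Prop :=
  necklaceRel n f.1 g.1

/-- Total number of binary necklaces of length `n`. -/
noncomputable def N₂ (n : ℕ) : ℕ :=
  (∑ d ∈ n.divisors, d.totient * 2 ^ (n / d)) / n


/-!
Burnside's lemma for the cyclic group `Fin n` acting on strings by translation. A string fixed by
the translation `c`, of order `d`, is a function on `Fin n ⧸ ⟨c⟩` (so there are `2 ^ (n / d)`
of them), and its number of ones is `d` times that of the function on the quotient. Hence all of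
them have an even number of ones when `d` is even and exactly half of them when `d` is odd, and
there are `φ d` translations of order `d`.
-/

open Finset AddAction

theorem two_mul_natCard_even_weight {ι : Type*} [Finite ι] [Nonempty ι] :
    2 * Nat.card {h : ι → Bool // Even (Nat.card {i // h i = true})} = 2 ^ Nat.card ι := by
  classical
  have := Fintype.ofFinite ι
  obtain ⟨i₀⟩ := ‹Nonempty ι›
  let toggle (h : ι → Bool) : ι → Bool := Function.update h i₀ (!h i₀)
  have card_split (h : ι → Bool) : Nat.card {i // h i = true} =
      (if h i₀ then 1 else 0) + ∑ i ∈ {i₀}ᶜ, if h i then 1 else 0 := by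
    rw [Nat.card_eq_fintype_card, Fintype.card_subtype, card_filter,
      Fintype.sum_eq_add_sum_compl i₀]
  have parity_toggle (h : ι → Bool) :
      Even (Nat.card {i // h i = true}) ↔ ¬Even (Nat.card {i // toggle h i = true}) := by
    have hrest :
        ∑ i ∈ {i₀}ᶜ, (if toggle h i then 1 else 0) = ∑ i ∈ {i₀}ᶜ, if h i then 1 else 0 :=
      sum_congr rfl fun i hi => by
        simp only [toggle, Function.update_of_ne (mem_compl.1 hi ∘ mem_singleton.2)]
    rw [card_split, card_split, hrest]
    generalize ∑ i ∈ {i₀}ᶜ, (if h i then 1 else 0) = r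
    cases h₀ : h i₀ <;> simp [toggle, h₀, Nat.even_add]
  have toggle_involutive : Function.Involutive toggle := fun h => by simp [toggle]
  have := Nat.card_congr (toggle_involutive.toPerm.subtypeEquiv
    (q := fun g => ¬Even (Nat.card {i // g i = true})) parity_toggle)
  rw [two_mul]
  nth_rw 2 [this]
  simp only [Nat.card_eq_fintype_card, Fintype.card_subtype_compl, Fintype.card_fun,
    Fintype.card_bool]
  exact Nat.add_sub_cancel' ((Fintype.card_subtype_le _).trans_eq (by simp))

section Translation

variable {A : Type*} [AddGroup A]

theorem mem_fixedBy_domAddAct_iff {β : Type*} {c : A} {f : A → β} :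
    f ∈ fixedBy (A → β) (DomAddAct.mk c) ↔ ∀ a, f (c + a) = f a := by
  simp [mem_fixedBy, funext_iff, DomAddAct.vadd_apply]

theorem natCard_quotient_zmultiples [Finite A] (c : A) :
    Nat.card (A ⧸ AddSubgroup.zmultiples c) = Nat.card A / addOrderOf c := by
  rw [← (AddSubgroup.zmultiples c).card_mul_index, Nat.card_zmultiples,
    Nat.mul_div_cancel_left _ (addOrderOf_pos c), AddSubgroup.index]

theorem natCard_true_comp_mk (c : A) (h : A ⧸ AddSubgroup.zmultiples c → Bool) :
    Nat.card {a : A // h a = true} = addOrderOf c * Nat.card {q // h q = true} := by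
  rw [← Nat.card_zmultiples, ← Nat.card_prod]
  exact Nat.card_congr (QuotientAddGroup.preimageMkEquivAddSubgroupProdSet _ {q | h q = true})

end Translation

section CommTranslation

variable {A : Type*} [AddCommGroup A]

def fixedByEquivQuotient (β : Type*) (c : A) :
    fixedBy (A → β) (DomAddAct.mk c) ≃ (A ⧸ AddSubgroup.zmultiples c → β) where
  toFun f := Quotient.lift f.1 fun a b hab => by
    obtain ⟨k, hk⟩ := AddSubgroup.mem_zmultiples_iff.1 (QuotientAddGroup.leftRel_apply.1 hab)
    have hf := mem_fixedBy_domAddAct_iff.1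
      (DomAddAct.mk_zsmul c k ▸ fixedBy_subset_fixedBy_zsmul _ _ k f.2) a
    rwa [← add_comm, hk, add_neg_cancel_left, eq_comm] at hf
  invFun h := ⟨h ∘ QuotientAddGroup.mk, mem_fixedBy_domAddAct_iff.2 fun a =>
    congrArg h (QuotientAddGroup.eq.2 (by simp))⟩
  left_inv _ := rfl
  right_inv h := funext fun q => QuotientAddGroup.induction_on q fun _ => rfl

theorem natCard_fixedBy_domAddAct [Finite A] (β : Type*) (c : A) :
    Nat.card (fixedBy (A → β) (DomAddAct.mk c)) = Nat.card β ^ (Nat.card A / addOrderOf c) := by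
  rw [Nat.card_congr (fixedByEquivQuotient β c), Nat.card_fun, natCard_quotient_zmultiples]

theorem two_mul_natCard_fixedBy_even_weight [Finite A] (c : A) :
    2 * Nat.card {f : fixedBy (A → Bool) (DomAddAct.mk c) //
        Even (Nat.card {a // f.1 a = true})} =
      2 ^ (Nat.card A / addOrderOf c) +
        if 2 ∣ addOrderOf c then 2 ^ (Nat.card A / addOrderOf c) else 0 := by
  rw [Nat.card_congr ((fixedByEquivQuotient Bool c).subtypeEquiv
      (p := fun f => Even (Nat.card {a // f.1 a = true}))
      (q := fun h => Even (addOrderOf c * Nat.card {q // h q = true}))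
      fun f => by rw [← natCard_true_comp_mk]; rfl),
    ← natCard_quotient_zmultiples]
  split_ifs with hd
  · rw [Nat.card_congr (Equiv.subtypeUnivEquiv fun h => (even_iff_two_dvd.2 hd).mul_right _),
      Nat.card_fun, Nat.card_eq_fintype_card (α := Bool), Fintype.card_bool, two_mul]
  · have hd : ¬Even (addOrderOf c) := fun h => hd (even_iff_two_dvd.1 h)
    simp only [Nat.even_mul, hd, false_or, add_zero]
    exact two_mul_natCard_even_weight

end CommTranslation

theorem sum_natCard_fixedBy_eq_natCard_orbits_mul (G X : Type*) [AddGroup G] [AddAction G X]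
    [Fintype G] [Finite X] :
    ∑ g : G, Nat.card (fixedBy X g) = Nat.card (orbitRel.Quotient G X) * Nat.card G := by
  classical
  have := Fintype.ofFinite X
  simp only [Nat.card_eq_fintype_card]
  convert sum_card_fixedBy_eq_card_orbits_mul_card_addGroup G X

def SubAddAction.fixedByEquiv {G X : Type*} [AddGroup G] [AddAction G X] (p : SubAddAction G X)
    (g : G) : fixedBy p g ≃ {x : fixedBy X g // x.1 ∈ p} where
  toFun x := ⟨⟨x.1.1, congrArg Subtype.val x.2⟩, x.1.2⟩
  invFun x := ⟨⟨x.1.1, x.2⟩, Subtype.ext x.1.2⟩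
  left_inv _ := rfl
  right_inv _ := rfl

theorem sum_addOrderOf_eq_sum_divisors {A M : Type*} [AddGroup A] [Fintype A] [IsAddCyclic A]
    [AddCommMonoid M] (F : ℕ → M) :
    ∑ a : A, F (addOrderOf a) = ∑ d ∈ (Nat.card A).divisors, d.totient • F d := by
  classical
  rw [Nat.card_eq_fintype_card, ← sum_fiberwise_of_maps_to (g := addOrderOf)
    fun a _ => Nat.mem_divisors.2 ⟨addOrderOf_dvd_card, Fintype.card_ne_zero⟩]
  refine sum_congr rfl fun d hd => ?_
  rw [sum_congr rfl fun a ha => congrArg F (mem_filter.1 ha).2, sum_const,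
    IsAddCyclic.card_addOrderOf_eq_totient (Nat.dvd_of_mem_divisors hd)]

instance {M : Type*} [Fintype M] : Fintype Mᵈᵃᵃ := Fintype.ofEquiv M DomAddAct.mk

section CyclicStrings

variable (A : Type*) [AddCommGroup A] [Fintype A] [IsAddCyclic A]

-- `Aᵈᵃᵃ` acts on strings `A → β` by translation: `(DomAddAct.mk c +ᵥ f) a = f (c + a)`.
def evenWeight : SubAddAction Aᵈᵃᵃ (A → Bool) where
  carrier := {f | Even (Nat.card {a // f a = true})}
  vadd_mem' c f hf := by
    change Even (Nat.card {a // f (DomAddAct.mk.symm c + a) = true})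
    rwa [Nat.card_congr ((Equiv.addLeft (DomAddAct.mk.symm c)).subtypeEquiv
      (p := fun a => f (DomAddAct.mk.symm c + a) = true) (q := fun a => f a = true)
      fun _ => Iff.rfl)]

theorem natCard_mul_natCard_orbits (β : Type*) [Finite β] :
    Nat.card A * Nat.card (orbitRel.Quotient Aᵈᵃᵃ (A → β)) =
      ∑ d ∈ (Nat.card A).divisors, d.totient * Nat.card β ^ (Nat.card A / d) := by
  calc Nat.card A * Nat.card (orbitRel.Quotient Aᵈᵃᵃ (A → β))
      = ∑ c : Aᵈᵃᵃ, Nat.card (fixedBy (A → β) c) := by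
        rw [sum_natCard_fixedBy_eq_natCard_orbits_mul, Nat.card_congr DomAddAct.mk.symm, mul_comm]
    _ = ∑ c : A, Nat.card β ^ (Nat.card A / addOrderOf c) := by
        simp only [← DomAddAct.mk.sum_comp, natCard_fixedBy_domAddAct]
    _ = _ := by
        simp only [sum_addOrderOf_eq_sum_divisors fun d => Nat.card β ^ (Nat.card A / d),
          smul_eq_mul]

theorem two_mul_natCard_mul_natCard_orbits_evenWeight :
    2 * Nat.card A * Nat.card (orbitRel.Quotient Aᵈᵃᵃ (evenWeight A)) =
      ∑ d ∈ (Nat.card A).divisors, d.totient * 2 ^ (Nat.card A / d) +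
        ∑ d ∈ (Nat.card A).divisors with 2 ∣ d, d.totient * 2 ^ (Nat.card A / d) := by
  calc 2 * Nat.card A * Nat.card (orbitRel.Quotient Aᵈᵃᵃ (evenWeight A))
      = ∑ c : A, 2 * Nat.card (fixedBy (evenWeight A) (DomAddAct.mk c)) := by
        rw [← mul_sum, DomAddAct.mk.sum_comp (fun c => Nat.card (fixedBy (evenWeight A) c)),
          sum_natCard_fixedBy_eq_natCard_orbits_mul, Nat.card_congr DomAddAct.mk.symm]
        ring
    _ = ∑ c : A, (2 ^ (Nat.card A / addOrderOf c) +
          if 2 ∣ addOrderOf c then 2 ^ (Nat.card A / addOrderOf c) else 0) := by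
        refine sum_congr rfl fun c _ => ?_
        rw [Nat.card_congr ((evenWeight A).fixedByEquiv _)]
        exact two_mul_natCard_fixedBy_even_weight c
    _ = _ := by
        rw [sum_addOrderOf_eq_sum_divisors
          fun d => 2 ^ (Nat.card A / d) + if 2 ∣ d then 2 ^ (Nat.card A / d) else 0, sum_filter]
        simp only [smul_eq_mul, mul_add, mul_ite, mul_zero, sum_add_distrib]

end CyclicStrings

theorem onesCount_eq_natCard {n : ℕ} (f : Fin n → Bool) :
    onesCount f = Nat.card {i // f i = true} := by
  rw [Nat.card_eq_fintype_card, Fintype.card_subtype, onesCount]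

section Necklaces

open Fin.NatCast

variable {n : ℕ} [NeZero n]

instance : IsAddCyclic (Fin n) :=
  ⟨1, fun a => ⟨a.val, by simp only [natCast_zsmul, nsmul_one, Fin.cast_val_eq_self]⟩⟩

theorem finRotate_pow_apply (k : ℕ) (i : Fin n) : (finRotate n ^ k) i = i + k := by
  induction k with
  | zero => simp
  | succ k ih =>
    rw [pow_succ', Equiv.Perm.mul_apply, ih, finRotate_apply, Nat.cast_succ, add_assoc]

theorem necklaceRel_iff_mem_orbit {f g : Fin n → Bool} :
    necklaceRel n f g ↔ g ∈ orbit (Fin n)ᵈᵃᵃ f := by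
  simp only [necklaceRel, mem_orbit_iff, funext_iff, DomAddAct.vadd_apply, Function.comp_apply,
    finRotate_pow_apply, vadd_eq_add]
  constructor
  · rintro ⟨k, hk⟩
    exact ⟨DomAddAct.mk k, fun i => by rw [hk, add_comm]; rfl⟩
  · rintro ⟨c, hc⟩
    exact ⟨(DomAddAct.mk.symm c).val, fun i => by rw [← hc, Fin.cast_val_eq_self, add_comm]⟩

theorem natCard_quot_necklaceRelEven :
    Nat.card (Quot (necklaceRelEven n)) =
      Nat.card (orbitRel.Quotient (Fin n)ᵈᵃᵃ (evenWeight (Fin n))) :=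
  Nat.card_congr <| Quot.congr (Equiv.subtypeEquivRight fun f => by rw [onesCount_eq_natCard]; rfl)
    fun x y => by
      rw [necklaceRelEven, necklaceRel_iff_mem_orbit, orbitRel_apply,
        SubAddAction.mem_orbit_subAdd_iff, mem_orbit_symm]
      rfl

theorem mul_N₂ : n * N₂ n = ∑ d ∈ n.divisors, d.totient * 2 ^ (n / d) := by
  have h := natCard_mul_natCard_orbits (Fin n) Bool
  rw [Nat.card_fin, Nat.card_eq_fintype_card (α := Bool), Fintype.card_bool] at h
  rw [N₂, ← h, Nat.mul_div_cancel_left _ (Nat.pos_of_neZero n)]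

end Necklaces

theorem necklaces_with_even_ones_general (n : ℕ) :
    2 * n * Nat.card (Quot (necklaceRelEven n)) =
      n * N₂ n + ∑ d ∈ n.divisors.filter (fun d => 2 ∣ d), d.totient * 2 ^ (n / d) := by
  rcases n.eq_zero_or_pos with rfl | hn
  · simp
  have : NeZero n := ⟨hn.ne'⟩
  rw [natCard_quot_necklaceRelEven, mul_N₂]
  simpa using two_mul_natCard_mul_natCard_orbits_evenWeight (Fin n)

theorem necklaces_with_even_ones (n : ℕ) (hn : 2 ≤ n) (he : Even n) :
    2 * n * Nat.card (Quot (necklaceRelEven n)) =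
      n * N₂ n + ∑ d ∈ n.divisors.filter (fun d => 2 ∣ d), d.totient * 2 ^ (n / d) :=
  necklaces_with_even_ones_general n
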